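/- Oddness of work under equilibrium start: under the assumptions of the previous statement, if additionally the stationary distribution p_1 of M_1 equals the initial distribution p_0, then there exists a constant k ∈ ℝ such that W_{Y,Ê}(x^R) = -W_{X,E}(x) + k for all x ∈ S^{N+1}; moreover, if all transition matrices satisfy detailed balance and Y is the time reversal of X, the energies Ê can be chosen so that k = 0. -/

import Mathlib

/-!
Two energy functions with the same Boltzmann distribution differ by a constant. Hence each
reversed energy `Ê_m` is, up to an additive constant `c_m`, the forward energy it shadows, and
the reversed work telescopes into minus the forward work plus `c_N - c_0` plus the first
forward increment `E_1 - E_0`, which is constant because `p_1 = p_0`. Replacing the last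
reversed energy `E_1` by `E_0`, which has the same distribution, cancels all constants.
-/

open Finset Real

section

variable {S : Type*}

noncomputable def gibbs [Fintype S] (β : ℝ) (f : S → ℝ) (a : S) : ℝ :=
  exp (-β * f a) / ∑ b, exp (-β * f b)

def work (E : ℕ → S → ℝ) (N : ℕ) (x : ℕ → S) : ℝ :=
  ∑ n ∈ range N, (E (n + 1) (x n) - E n (x n))

def reversedEnergy (E : ℕ → S → ℝ) (N : ℕ) : ℕ → S → ℝ
  | 0 => E N
  | n + 1 => E (N - n)

theorem log_gibbs [Fintype S] (β : ℝ) (f : S → ℝ) (a : S) :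
    log (gibbs β f a) = -β * f a - log (∑ b, exp (-β * f b)) := by
  have hZ : ∑ b, exp (-β * f b) ≠ 0 :=
    (sum_pos (fun b _ => exp_pos _) ⟨a, mem_univ a⟩).ne'
  rw [gibbs, log_div (exp_pos _).ne' hZ, log_exp]

theorem exists_eq_add_const_of_gibbs_eq [Fintype S] {β : ℝ} (hβ : β ≠ 0) {f g : S → ℝ}
    (h : ∀ a, gibbs β f a = gibbs β g a) :
    ∃ c, ∀ a, g a = f a + c := by
  refine ⟨(log (∑ b, exp (-β * f b)) - log (∑ b, exp (-β * g b))) / β, fun a => ?_⟩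
  have hlog := congrArg log (h a)
  rw [log_gibbs, log_gibbs] at hlog
  have hdiff : (g a - f a) * β = log (∑ b, exp (-β * f b)) - log (∑ b, exp (-β * g b)) := by
    linear_combination hlog
  rw [← hdiff, mul_div_cancel_right₀ _ hβ]
  ring

theorem work_eq_add_of_eq_add_const {F G : ℕ → S → ℝ} {c : ℕ → ℝ} {N : ℕ}
    (h : ∀ m ≤ N, ∀ a, F m a = G m a + c m) (x : ℕ → S) :
    work F N x = work G N x + (c N - c 0) := by
  rw [work, work, ← sum_range_sub c, ← sum_add_distrib]
  refine sum_congr rfl fun n hn => ?_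
  rw [mem_range] at hn
  rw [h (n + 1) hn (x n), h n hn.le (x n)]
  ring

theorem reversedEnergy_self {E : ℕ → S → ℝ} {N : ℕ} (hN : 0 < N) :
    reversedEnergy E N N = E 1 := by
  obtain ⟨K, rfl⟩ := Nat.exists_eq_add_one_of_ne_zero hN.ne'
  simp [reversedEnergy]

theorem work_reversedEnergy (E : ℕ → S → ℝ) {N : ℕ} (hN : 0 < N) (x : ℕ → S) :
    work (reversedEnergy E N) N (fun n => x (N - n)) = E 1 (x 0) - E 0 (x 0) - work E N x := by
  obtain ⟨K, rfl⟩ := Nat.exists_eq_add_one_of_ne_zero hN.ne'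
  have hreflect : ∑ n ∈ range K, (E (K - n) (x (K - n)) - E (K + 1 - n) (x (K - n)))
      = -∑ j ∈ range K, (E (j + 1 + 1) (x (j + 1)) - E (j + 1) (x (j + 1))) := by
    rw [← sum_range_reflect _ K, ← sum_neg_distrib]
    refine sum_congr rfl fun n hn => ?_
    rw [mem_range] at hn
    rw [show K - (K - 1 - n) = n + 1 by omega, show K + 1 - (K - 1 - n) = n + 1 + 1 by omega]
    ring
  simp only [work, sum_range_succ' _ K, reversedEnergy, Nat.sub_zero, sub_self, add_zero,
    Nat.add_sub_add_right, hreflect]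
  ring

end

theorem stmt_15_general {S : Type*} [Fintype S] (N : ℕ)
    (β : ℝ) (hβ : 0 < β)
    (M : ℕ → Matrix S S ℝ) (p : ℕ → S → ℝ) (E Ehat : ℕ → S → ℝ)
    (hE : ∀ n ≤ N, ∀ a, p n a = Real.exp (-β * E n a) / ∑ b, Real.exp (-β * E n b))
    (hEhat0 : ∀ a, p N a = Real.exp (-β * Ehat 0 a) / ∑ b, Real.exp (-β * Ehat 0 b))
    (hEhat : ∀ n < N, ∀ a,
      p (N - n) a = Real.exp (-β * Ehat (n + 1) a) / ∑ b, Real.exp (-β * Ehat (n + 1) b))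
    -- the stationary distribution of M_1 equals the initial distribution
    (hp01 : ∀ a, p 1 a = p 0 a) :
    (∃ k : ℝ, ∀ x : ℕ → S,
      (∑ n ∈ Finset.range N, (Ehat (n + 1) (x (N - n)) - Ehat n (x (N - n))))
        = -(∑ n ∈ Finset.range N, (E (n + 1) (x n) - E n (x n))) + k)
    ∧
    ((∀ n, 1 ≤ n → n ≤ N → ∀ a b, M n b a * p n a = M n a b * p n b) →
      ∃ Ehat' : ℕ → S → ℝ,
        (∀ a, p N a = Real.exp (-β * Ehat' 0 a) / ∑ b, Real.exp (-β * Ehat' 0 b)) ∧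
        (∀ n < N, ∀ a, p (N - n) a
          = Real.exp (-β * Ehat' (n + 1) a) / ∑ b, Real.exp (-β * Ehat' (n + 1) b)) ∧
        ∀ x : ℕ → S,
          (∑ n ∈ Finset.range N, (Ehat' (n + 1) (x (N - n)) - Ehat' n (x (N - n))))
            = -(∑ n ∈ Finset.range N, (E (n + 1) (x n) - E n (x n)))) := by
  rcases Nat.eq_zero_or_pos N with rfl | hN
  · exact ⟨⟨0, fun x => by simp⟩, fun _ => ⟨Ehat, hEhat0, hEhat, fun x => by simp⟩⟩
  obtain ⟨c₁, hc₁⟩ := exists_eq_add_const_of_gibbs_eq hβ.ne' fun a =>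
    (hE 0 N.zero_le a).symm.trans ((hp01 a).symm.trans (hE 1 hN a))
  have hrev : ∀ m ≤ N, ∀ a, gibbs β (reversedEnergy E N m) a = gibbs β (Ehat m) a := by
    rintro (_ | n) hn a
    · exact (hE N le_rfl a).symm.trans (hEhat0 a)
    · exact (hE (N - n) (Nat.sub_le N n) a).symm.trans (hEhat n hn a)
  choose! c hc using fun m hm => exists_eq_add_const_of_gibbs_eq hβ.ne' (hrev m hm)
  refine ⟨⟨c₁ + (c N - c 0), fun x => ?_⟩, fun _ => ?_⟩
  · change work Ehat N (fun n => x (N - n)) = -work E N x + _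
    rw [work_eq_add_of_eq_add_const hc, work_reversedEnergy E hN, hc₁]
    ring
  · set Ehat' : ℕ → S → ℝ := fun m => if m = N then E 0 else reversedEnergy E N m
    have hshift : ∀ m ≤ N, ∀ a,
        Ehat' m a = reversedEnergy E N m a + if m = N then -c₁ else 0 := by
      intro m _ a
      by_cases hm : m = N
      · simp only [Ehat', hm, if_true, reversedEnergy_self hN, hc₁]
        ring
      · simp only [Ehat', hm, if_false, add_zero]
    refine ⟨Ehat', fun a => ?_, fun n hn a => ?_, fun x => ?_⟩
    · simpa only [Ehat', if_neg hN.ne, reversedEnergy] using hE N le_rfl a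
    · by_cases hnN : n + 1 = N
      · simpa only [Ehat', hnN, if_true, show N - n = 1 by omega, hp01] using hE 0 N.zero_le a
      · simpa only [Ehat', hnN, if_false, reversedEnergy] using hE (N - n) (Nat.sub_le N n) a
    · change work Ehat' N (fun n => x (N - n)) = -work E N x
      rw [work_eq_add_of_eq_add_const hshift, work_reversedEnergy E hN, hc₁]
      simp only [if_true, if_neg hN.ne]
      ring

/-- Oddness of work under equilibrium start: if additionally p_1 = p_0,
then there is a constant k with W_{Y,Ê}(x^R) = -W_{X,E}(x) + k for all realizations x;
moreover, under detailed balance (Y being the time reversal of X) the energies Ê can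
be chosen so that k = 0. -/
theorem stmt_15 {S : Type*} [Fintype S] [DecidableEq S] [Nonempty S] (N : ℕ)
    (β : ℝ) (hβ : 0 < β)
    (M : ℕ → Matrix S S ℝ) (p : ℕ → S → ℝ) (E Ehat : ℕ → S → ℝ)
    (hp0 : ∀ x, 0 < p 0 x) (hp0sum : ∑ x, p 0 x = 1)
    (hstoch : ∀ n, 1 ≤ n → n ≤ N → (∀ a b, 0 ≤ M n a b) ∧ ∀ b, ∑ a, M n a b = 1)
    (hirr : ∀ n, 1 ≤ n → n ≤ N → ∀ a b, ∃ m : ℕ, 1 ≤ m ∧ 0 < ((M n) ^ m) a b)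
    (hstat : ∀ n, 1 ≤ n → n ≤ N → ∀ a, ∑ b, M n a b * p n b = p n a)
    (hpos : ∀ n, 1 ≤ n → n ≤ N → ∀ a, 0 < p n a)
    (hE : ∀ n ≤ N, ∀ a, p n a = Real.exp (-β * E n a) / ∑ b, Real.exp (-β * E n b))
    (hEhat0 : ∀ a, p N a = Real.exp (-β * Ehat 0 a) / ∑ b, Real.exp (-β * Ehat 0 b))
    (hEhat : ∀ n < N, ∀ a,
      p (N - n) a = Real.exp (-β * Ehat (n + 1) a) / ∑ b, Real.exp (-β * Ehat (n + 1) b))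
    -- the stationary distribution of M_1 equals the initial distribution
    (hp01 : ∀ a, p 1 a = p 0 a) :
    (∃ k : ℝ, ∀ x : ℕ → S,
      (∑ n ∈ Finset.range N, (Ehat (n + 1) (x (N - n)) - Ehat n (x (N - n))))
        = -(∑ n ∈ Finset.range N, (E (n + 1) (x n) - E n (x n))) + k)
    ∧
    ((∀ n, 1 ≤ n → n ≤ N → ∀ a b, M n b a * p n a = M n a b * p n b) →
      ∃ Ehat' : ℕ → S → ℝ,
        (∀ a, p N a = Real.exp (-β * Ehat' 0 a) / ∑ b, Real.exp (-β * Ehat' 0 b)) ∧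
        (∀ n < N, ∀ a, p (N - n) a
          = Real.exp (-β * Ehat' (n + 1) a) / ∑ b, Real.exp (-β * Ehat' (n + 1) b)) ∧
        ∀ x : ℕ → S,
          (∑ n ∈ Finset.range N, (Ehat' (n + 1) (x (N - n)) - Ehat' n (x (N - n))))
            = -(∑ n ∈ Finset.range N, (E (n + 1) (x n) - E n (x n)))) :=
  stmt_15_general N β hβ M p E Ehat hE hEhat0 hEhat hp01
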